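/- arXiv:math/0511641 — 9 statements merged into one kernel-verified Lean document; each statement's English description precedes it below -/
import Mathlib

section
/- Let B be a (d+1)×(d+1) tridiagonal matrix over a field with all diagonal entries zero, subdiagonal entries β_1,...,β_d and superdiagonal entries γ_1,...,γ_d, all nonzero. If d is even, then the null space of B is one-dimensional, spanned by the vector v = (v_0,...,v_d) with v_k = 0 for k odd and v_k = ∏_{1 ≤ i ≤ k-1, i odd} (-β_i/γ_{i+1}) for k even. -/
/-!
Row `i` of `B x = 0` reads `β i * x (i - 1) + γ (i + 1) * x (i + 1) = 0`. Row `0` forces `x 1 = 0`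
and, as `γ` does not vanish, rows `1, …, d - 1` determine `x (i + 1)` from `x (i - 1)`; so a kernel
vector is fixed by `x 0`. The given `v` solves this recurrence with `v 0 = 1`, and since `d` is even
the last row `β d * v (d - 1) = 0` holds because `v` vanishes at odd indices.
-/

open Matrix Finset

def tridiagKerSeq {K : Type*} [Field K] (β γ : ℕ → K) (k : ℕ) : K :=
  if Odd k then 0 else ∏ i ∈ (range k).filter (fun i => Odd i), (-(β i / γ (i + 1)))

section KerSeq

variable {K : Type*} [Field K] (β γ : ℕ → K)

@[simp]
lemma tridiagKerSeq_zero : tridiagKerSeq β γ 0 = 1 := by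
  simp [tridiagKerSeq]

lemma tridiagKerSeq_of_odd {k : ℕ} (hk : Odd k) : tridiagKerSeq β γ k = 0 := by
  simp [tridiagKerSeq, hk]

lemma tridiagKerSeq_add_two (n : ℕ) :
    tridiagKerSeq β γ (n + 2) = -(β (n + 1) / γ (n + 2)) * tridiagKerSeq β γ n := by
  rcases Nat.even_or_odd n with hn | hn
  · have hodd : (range (n + 2)).filter (fun i => Odd i)
        = insert (n + 1) ((range n).filter (fun i => Odd i)) := by
      ext i
      simp only [mem_filter, mem_range, mem_insert, Nat.odd_iff]
      have := Nat.even_iff.mp hn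
      omega
    have hn' : ¬Odd (n + 2) := by simpa [Nat.not_odd_iff_even, parity_simps] using hn
    rw [tridiagKerSeq, if_neg hn', hodd, prod_insert (by simp), tridiagKerSeq,
      if_neg (Nat.not_odd_iff_even.mpr hn)]
  · rw [tridiagKerSeq_of_odd β γ hn, tridiagKerSeq_of_odd β γ (hn.add_even even_two), mul_zero]

end KerSeq

lemma eq_mul_of_two_step_recurrence {K : Type*} [Field K] {d : ℕ} {c y : ℕ → K}
    {x : Fin (d + 1) → K} (hy0 : y 0 = 1) (hy1 : y 1 = 0)
    (hy : ∀ n, y (n + 2) = c n * y n) (hx1 : ∀ h : 1 < d + 1, x ⟨1, h⟩ = 0)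
    (hx : ∀ n (h : n + 2 < d + 1), x ⟨n + 2, h⟩ = c n * x ⟨n, by omega⟩) :
    ∀ k (h : k < d + 1), x ⟨k, h⟩ = x 0 * y k := by
  intro k
  induction k using Nat.twoStepInduction with
  | zero => intro _; simp [hy0]
  | one => intro h; simp [hx1 h, hy1]
  | more n ih _ => intro h; rw [hx n h, ih (by omega), hy]; ring

section Tridiagonal

variable {d : ℕ} {K : Type*} [Field K] {β γ : ℕ → K} {B : Matrix (Fin (d + 1)) (Fin (d + 1)) K}

lemma entry_eq_zero_of_not_adjacent (hdiag : ∀ i, B i i = 0)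
    (hzero : ∀ i j : Fin (d + 1), (i : ℕ) + 1 < (j : ℕ) ∨ (j : ℕ) + 1 < (i : ℕ) → B i j = 0)
    {i j : Fin (d + 1)} (h₁ : (i : ℕ) ≠ j + 1) (h₂ : (i : ℕ) + 1 ≠ j) : B i j = 0 := by
  rcases eq_or_ne i j with rfl | hij
  · exact hdiag i
  · exact hzero i j (by have := Fin.val_ne_of_ne hij; omega)

variable (hband : ∀ i j : Fin (d + 1), (i : ℕ) ≠ j + 1 → (i : ℕ) + 1 ≠ j → B i j = 0)
  (hsup : ∀ i j : Fin (d + 1), (i : ℕ) + 1 = (j : ℕ) → B i j = γ j)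
include hband hsup

lemma mulVec_apply_zero_of_band (x : Fin (d + 1) → K) (h : 1 < d + 1) :
    (B *ᵥ x) 0 = γ 1 * x ⟨1, h⟩ := by
  rw [mulVec, dotProduct, Fintype.sum_eq_single ⟨1, h⟩, hsup _ _ (by simp)]
  intro j hj
  rw [hband _ _ (by simp) (by simpa [Fin.ext_iff, eq_comm] using hj), zero_mul]

variable (hsub : ∀ i j : Fin (d + 1), (i : ℕ) = (j : ℕ) + 1 → B i j = β i)
include hsub

lemma mulVec_apply_succ_of_band (x : Fin (d + 1) → K) (n : ℕ) (h : n + 2 < d + 1) :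
    (B *ᵥ x) ⟨n + 1, by omega⟩ = β (n + 1) * x ⟨n, by omega⟩ + γ (n + 2) * x ⟨n + 2, h⟩ := by
  rw [mulVec, dotProduct, Fintype.sum_eq_add ⟨n, by omega⟩ ⟨n + 2, h⟩ (by simp [Fin.ext_iff]),
    hsub _ _ rfl, hsup _ _ rfl]
  rintro j ⟨h₁, h₂⟩
  simp only [ne_eq, Fin.ext_iff] at h₁ h₂
  rw [hband _ _ (by simp; omega) (by simp; omega), zero_mul]

variable (hγ : ∀ i : ℕ, 1 ≤ i → i ≤ d → γ i ≠ 0)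
include hγ

/-- Rows of even index only see odd entries, which vanish; rows of odd index are interior
(as `d` is even) and cancel by `tridiagKerSeq_add_two`. -/
lemma mulVec_tridiagKerSeq (hd : Even d) :
    B *ᵥ (fun k : Fin (d + 1) => tridiagKerSeq β γ k) = 0 := by
  funext i
  obtain ⟨r, hr⟩ := hd
  rcases Nat.even_or_odd (i : ℕ) with ⟨m, hi⟩ | ⟨m, hi⟩
  · rw [Pi.zero_apply, mulVec, dotProduct]
    refine Fintype.sum_eq_zero _ fun j => ?_
    rcases Nat.even_or_odd (j : ℕ) with ⟨l, hj⟩ | hj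
    · rw [hband i j (by omega) (by omega), zero_mul]
    · rw [tridiagKerSeq_of_odd β γ hj, mul_zero]
  · have hlt : 2 * m + 2 < d + 1 := by have := i.isLt; omega
    rw [show i = ⟨2 * m + 1, by omega⟩ from Fin.ext hi,
      mulVec_apply_succ_of_band hband hsup hsub _ _ hlt, tridiagKerSeq_add_two, Pi.zero_apply]
    have := hγ (2 * m + 2) (by omega) (by omega)
    field_simp
    ring

lemma eq_smul_tridiagKerSeq_of_mulVec_eq_zero {x : Fin (d + 1) → K} (hx : B *ᵥ x = 0) :
    x = x 0 • fun k : Fin (d + 1) => tridiagKerSeq β γ k := by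
  have hrec := eq_mul_of_two_step_recurrence (x := x) (tridiagKerSeq_zero β γ)
    (tridiagKerSeq_of_odd β γ odd_one) (tridiagKerSeq_add_two β γ) ?_ ?_
  · funext k
    simpa using hrec k k.isLt
  · intro h
    have h0 := congrFun hx 0
    rw [mulVec_apply_zero_of_band hband hsup, Pi.zero_apply] at h0
    exact (mul_eq_zero.mp h0).resolve_left (hγ 1 le_rfl (by omega))
  · intro n h
    have hn := congrFun hx ⟨n + 1, by omega⟩
    rw [mulVec_apply_succ_of_band hband hsup hsub _ _ h, Pi.zero_apply] at hn
    have := hγ (n + 2) (by omega) (by omega)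
    field_simp
    linear_combination hn

end Tridiagonal

theorem stmt2_general {d : ℕ} {K : Type*} [Field K]
    (β γ : ℕ → K) (B : Matrix (Fin (d+1)) (Fin (d+1)) K)
    (hdiag : ∀ i, B i i = 0)
    (hsub : ∀ i j : Fin (d+1), (i : ℕ) = (j : ℕ) + 1 → B i j = β i)
    (hsup : ∀ i j : Fin (d+1), (i : ℕ) + 1 = (j : ℕ) → B i j = γ j)
    (hzero : ∀ i j : Fin (d+1), (i : ℕ) + 1 < (j : ℕ) ∨ (j : ℕ) + 1 < (i : ℕ) → B i j = 0)
    (hγ : ∀ i : ℕ, 1 ≤ i → i ≤ d → γ i ≠ 0)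
    (hd : Even d)
    (v : Fin (d+1) → K)
    (hv : v = fun k : Fin (d+1) => if Odd (k : ℕ) then 0 else
      ∏ i ∈ (Finset.range (k : ℕ)).filter (fun i => Odd i), (-(β i / γ (i+1)))) :
    v ≠ 0 ∧
    LinearMap.ker (Matrix.toLin' B) = Submodule.span K {v} := by
  have hband : ∀ i j : Fin (d + 1), (i : ℕ) ≠ j + 1 → (i : ℕ) + 1 ≠ j → B i j = 0 :=
    fun _ _ => entry_eq_zero_of_not_adjacent hdiag hzero
  obtain rfl : v = fun k : Fin (d + 1) => tridiagKerSeq β γ k := hv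
  refine ⟨fun h => by simpa using congrFun h 0, ?_⟩
  ext x
  rw [LinearMap.mem_ker, toLin'_apply, Submodule.mem_span_singleton]
  constructor
  · exact fun hx => ⟨x 0, (eq_smul_tridiagKerSeq_of_mulVec_eq_zero hband hsup hsub hγ hx).symm⟩
  · rintro ⟨a, rfl⟩
    rw [mulVec_smul, mulVec_tridiagKerSeq hband hsup hsub hγ hd, smul_zero]

/-- null space of a tridiagonal matrix with zero diagonal and
nonzero off-diagonal band, d even: one-dimensional with the stated spanning vector. -/
theorem stmt2 {d : ℕ} {K : Type*} [Field K]
    (β γ : ℕ → K) (B : Matrix (Fin (d+1)) (Fin (d+1)) K)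
    (hdiag : ∀ i, B i i = 0)
    (hsub : ∀ i j : Fin (d+1), (i : ℕ) = (j : ℕ) + 1 → B i j = β i)
    (hsup : ∀ i j : Fin (d+1), (i : ℕ) + 1 = (j : ℕ) → B i j = γ j)
    (hzero : ∀ i j : Fin (d+1), (i : ℕ) + 1 < (j : ℕ) ∨ (j : ℕ) + 1 < (i : ℕ) → B i j = 0)
    (hβ : ∀ i : ℕ, 1 ≤ i → i ≤ d → β i ≠ 0)
    (hγ : ∀ i : ℕ, 1 ≤ i → i ≤ d → γ i ≠ 0)
    (hd : Even d)
    (v : Fin (d+1) → K)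
    (hv : v = fun k : Fin (d+1) => if Odd (k : ℕ) then 0 else
      ∏ i ∈ (Finset.range (k : ℕ)).filter (fun i => Odd i), (-(β i / γ (i+1)))) :
    v ≠ 0 ∧
    LinearMap.ker (Matrix.toLin' B) = Submodule.span K {v} :=
  stmt2_general β γ B hdiag hsub hsup hzero hγ hd v hv
end

section
/- Let A be an irreducible tridiagonal (d+1)×(d+1) matrix over a field K with superdiagonal entries b_0,...,b_{d-1} and subdiagonal entries c_1,...,c_d satisfying b_{i-1}c_i ≠ 0, and let A* be the diagonal matrix with distinct diagonal entries θ*_0,...,θ*_d. If d is odd, then det(AA* - A*A) = ∏_{1 ≤ i ≤ d, i odd} b_{i-1} c_i (θ*_{i-1} - θ*_i)^2; in particular AA* - A*A is invertible. -/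
/-!
The commutator `A A* - A* A` has entries `A i j * (θ j - θ i)`: it is tridiagonal with zero
diagonal. Expanding the determinant of such a matrix along its first row and then its first
column peels off the factor `-M 0 1 * M 1 0` and leaves a matrix of the same kind, two sizes
smaller. In even size `d + 1` this ends with the empty matrix, and the factors are
`-b (i-1) (θ i - θ (i-1)) * c i (θ (i-1) - θ i) = b (i-1) c i (θ (i-1) - θ i) ^ 2`
for odd `i`, which are nonzero by irreducibility and the distinctness of the `θ i`.
-/

open Matrix Finset

namespace Matrix

variable {R : Type*} [CommRing R]

theorem det_eq_neg_mul_det_submatrix_succ_succ {n : ℕ} (M : Matrix (Fin (n + 2)) (Fin (n + 2)) R)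
    (hrow : ∀ j, j ≠ 1 → M 0 j = 0) (hcol : ∀ i, i ≠ 1 → M i 0 = 0) :
    M.det = -(M 0 1 * M 1 0) *
      (M.submatrix (fun i : Fin n => i.succ.succ) (fun j : Fin n => j.succ.succ)).det := by
  rw [det_succ_row_zero, sum_eq_single 1 (fun j _ hj => by simp [hrow j hj]) (by simp),
    det_succ_column_zero, sum_eq_single 0 (fun i _ hi => ?_) (by simp)]
  · have hminor : (M.submatrix Fin.succ (Fin.succAbove 1)).submatrix Fin.succ Fin.succ =
        M.submatrix (fun i : Fin n => i.succ.succ) (fun j : Fin n => j.succ.succ) := by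
      ext i j; simp
    simp only [submatrix_apply, Fin.succAbove_zero, Fin.one_succAbove_zero, Fin.succ_zero_eq_one,
      Fin.val_zero, Fin.val_one, pow_zero, pow_one, hminor]
    ring
  · have hi1 : i.succ ≠ 1 := by rwa [← Fin.succ_zero_eq_one, Ne, Fin.succ_inj]
    simp [hcol _ hi1]

theorem det_eq_prod_of_tridiagonal_of_diag_eq_zero {m : ℕ}
    (M : Matrix (Fin (2 * m)) (Fin (2 * m)) R) (u v : ℕ → R)
    (hsup : ∀ i j : Fin (2 * m), (i : ℕ) + 1 = j → M i j = u i)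
    (hsub : ∀ i j : Fin (2 * m), (i : ℕ) = j + 1 → M i j = v j)
    (hzero : ∀ i j : Fin (2 * m), (i : ℕ) + 1 ≠ j → (j : ℕ) + 1 ≠ i → M i j = 0) :
    M.det = ∏ k ∈ range m, -(u (2 * k) * v (2 * k)) := by
  induction m generalizing u v with
  | zero => simp
  | succ m ih =>
    change Matrix (Fin (2 * m + 2)) (Fin (2 * m + 2)) R at M
    have hrow : ∀ j, j ≠ 1 → M 0 j = 0 := fun j hj =>
      hzero _ _ (by simpa [Fin.ext_iff] using hj.symm) (by simp)
    have hcol : ∀ i, i ≠ 1 → M i 0 = 0 := fun i hi =>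
      hzero _ _ (by simp) (by simpa [Fin.ext_iff] using hi.symm)
    rw [det_eq_neg_mul_det_submatrix_succ_succ M hrow hcol,
      ih (M.submatrix (fun i => i.succ.succ) (fun j => j.succ.succ)) (u <| · + 2) (v <| · + 2)
        (fun i j h => hsup _ _ (by simp; omega)) (fun i j h => hsub _ _ (by simp; omega))
        (fun i j h h' => hzero _ _ (by simp; omega) (by simp; omega)),
      prod_range_succ', hsup 0 1 (by simp [Nat.mod_eq_of_lt (show 1 < 2 * (m + 1) by omega)]),
      hsub 1 0 (by simp [Nat.mod_eq_of_lt (show 1 < 2 * (m + 1) by omega)])]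
    simp only [Fin.val_zero, mul_zero]
    ring_nf

theorem mul_diagonal_sub_diagonal_mul_apply {n : Type*} [Fintype n] [DecidableEq n]
    (A : Matrix n n R) (d : n → R) (i j : n) :
    (A * diagonal d - diagonal d * A) i j = A i j * (d j - d i) := by
  rw [sub_apply, mul_diagonal, diagonal_mul]
  ring

theorem det_mul_diagonal_sub_diagonal_mul_of_tridiagonal {m : ℕ} (b c θ : ℕ → R)
    (A : Matrix (Fin (2 * m)) (Fin (2 * m)) R)
    (hsup : ∀ i j : Fin (2 * m), (i : ℕ) + 1 = j → A i j = b i)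
    (hsub : ∀ i j : Fin (2 * m), (i : ℕ) = j + 1 → A i j = c i)
    (hzero : ∀ i j : Fin (2 * m), (i : ℕ) + 1 < j ∨ (j : ℕ) + 1 < i → A i j = 0) :
    (A * diagonal (fun i : Fin _ => θ i) - diagonal (fun i : Fin _ => θ i) * A).det =
      ∏ k ∈ range m, b (2 * k) * c (2 * k + 1) * (θ (2 * k) - θ (2 * k + 1)) ^ 2 := by
  rw [det_eq_prod_of_tridiagonal_of_diag_eq_zero _
    (fun i => b i * (θ (i + 1) - θ i)) (fun j => c (j + 1) * (θ j - θ (j + 1)))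
    (fun i j h => by rw [mul_diagonal_sub_diagonal_mul_apply, hsup i j h, ← h])
    (fun i j h => by rw [mul_diagonal_sub_diagonal_mul_apply, hsub i j h, h])
    (fun i j h h' => ?_)]
  · exact prod_congr rfl fun k _ => by ring
  · rw [mul_diagonal_sub_diagonal_mul_apply]
    rcases eq_or_ne i j with rfl | hij
    · rw [sub_self, mul_zero]
    · rw [hzero i j (by omega), zero_mul]

end Matrix

theorem Finset.prod_filter_odd_range_two_mul {M : Type*} [CommMonoid M] (m : ℕ) (f : ℕ → M) :
    ∏ i ∈ (range (2 * m)).filter Odd, f i = ∏ k ∈ range m, f (2 * k + 1) := by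
  induction m with
  | zero => simp
  | succ m ih =>
    rw [prod_filter] at ih ⊢
    rw [show 2 * (m + 1) = 2 * m + 1 + 1 by ring, prod_range_succ, prod_range_succ, ih,
      prod_range_succ]
    simp

/-- determinant of the commutator A A* - A* A for d odd. -/
theorem stmt3 {d : ℕ} {K : Type*} [Field K]
    (b c θ : ℕ → K) (A : Matrix (Fin (d+1)) (Fin (d+1)) K)
    (hsup : ∀ i j : Fin (d+1), (i : ℕ) + 1 = (j : ℕ) → A i j = b i)
    (hsub : ∀ i j : Fin (d+1), (i : ℕ) = (j : ℕ) + 1 → A i j = c i)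
    (hzero : ∀ i j : Fin (d+1), (i : ℕ) + 1 < (j : ℕ) ∨ (j : ℕ) + 1 < (i : ℕ) → A i j = 0)
    (hbc : ∀ i : ℕ, 1 ≤ i → i ≤ d → b (i-1) * c i ≠ 0)
    (hθ : ∀ i j : ℕ, i ≤ d → j ≤ d → θ i = θ j → i = j)
    (hd : Odd d)
    (As : Matrix (Fin (d+1)) (Fin (d+1)) K)
    (hAs : As = Matrix.diagonal (fun i : Fin (d+1) => θ (i : ℕ))) :
    (A * As - As * A).det =
      ∏ i ∈ (Finset.range (d+1)).filter (fun i => Odd i),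
        b (i-1) * c i * (θ (i-1) - θ i)^2 ∧
    IsUnit (A * As - As * A) := by
  obtain ⟨m, rfl⟩ := hd
  subst hAs
  have hdet : (A * diagonal (fun i : Fin _ => θ i) - diagonal (fun i : Fin _ => θ i) * A).det =
      ∏ i ∈ (range (2 * (m + 1))).filter Odd, b (i - 1) * c i * (θ (i - 1) - θ i) ^ 2 := by
    refine (det_mul_diagonal_sub_diagonal_mul_of_tridiagonal (m := m + 1) b c θ A hsup hsub
      hzero).trans ?_
    rw [prod_filter_odd_range_two_mul]
    simp only [Nat.add_sub_cancel]
  refine ⟨hdet, ?_⟩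
  rw [isUnit_iff_isUnit_det, hdet, isUnit_iff_ne_zero, prod_ne_zero_iff]
  intro i hi
  obtain ⟨hi_range, hi_odd⟩ := mem_filter.mp hi
  have hi_pos : 1 ≤ i := hi_odd.pos
  have hi_le : i ≤ 2 * m + 1 := by rw [mem_range] at hi_range; omega
  have hθi : θ (i - 1) ≠ θ i := fun h => by have := hθ _ _ (by omega) hi_le h; omega
  exact mul_ne_zero (hbc i hi_pos hi_le) (pow_ne_zero 2 (sub_ne_zero.mpr hθi))
end

section
/- Let A be an irreducible tridiagonal (d+1)×(d+1) matrix over a field K with superdiagonal entries b_0,...,b_{d-1} and subdiagonal entries c_1,...,c_d (all b_{i-1}c_i ≠ 0), and let A* be the diagonal matrix with distinct diagonal entries θ*_0,...,θ*_d. If d is even, then the null space of AA* - A*A has dimension 1 and is spanned by the vector (γ_0,...,γ_d) where γ_k = 0 for k odd and γ_k = ∏_{1 ≤ i ≤ k-1, i odd} c_i(θ*_{i-1} - θ*_i) / (b_i(θ*_i - θ*_{i+1})) for k even. -/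
open Matrix Finset

/-!
The commutator `B = A A* - A* A` has entries `B i j = A i j * (θ* j - θ* i)`, so it is tridiagonal
with zero diagonal and nonzero superdiagonal. Row `k` of `B x = 0` therefore determines `x (k+1)`
from `x (k-1)`: row `0` forces `x 1 = 0`, hence every odd coordinate vanishes and a kernel vector
is determined by `x 0`. The vector `γ` is the solution with `γ 0 = 1`; for it the last row `d`
holds because `d` is even, so `γ (d-1) = 0` and there is no coordinate `d+1`.
-/

def zeroExtend {n : ℕ} {M : Type*} [Zero M] (x : Fin n → M) (m : ℕ) : M :=
  if h : m < n then x ⟨m, h⟩ else 0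

section zeroExtend

variable {n : ℕ} {M : Type*}

@[simp]
lemma zeroExtend_val [Zero M] (x : Fin n → M) (i : Fin n) : zeroExtend x i = x i := by
  simp [zeroExtend]

lemma zeroExtend_of_lt [Zero M] (x : Fin n → M) {m : ℕ} (hm : m < n) :
    zeroExtend x m = x ⟨m, hm⟩ := by
  simp [zeroExtend, hm]

lemma zeroExtend_of_le [Zero M] (x : Fin n → M) {m : ℕ} (hm : n ≤ m) : zeroExtend x m = 0 := by
  simp [zeroExtend, hm]

lemma sum_eq_zeroExtend_add_zeroExtend [AddCommMonoid M] (f : Fin n → M) {a b : ℕ} (hab : a ≠ b)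
    (hf : ∀ j : Fin n, (j : ℕ) ≠ a → (j : ℕ) ≠ b → f j = 0) :
    ∑ j, f j = zeroExtend f a + zeroExtend f b := by
  simp_rw [← zeroExtend_val f]
  rw [Fin.sum_univ_eq_sum_range (zeroExtend f)]
  refine sum_eq_add a b hab (fun m hm ⟨ha, hb⟩ => ?_) (fun ha => ?_) (fun hb => ?_)
  · simpa [zeroExtend, mem_range.mp hm] using hf ⟨m, mem_range.mp hm⟩ ha hb
  · exact zeroExtend_of_le f (by simpa using ha)
  · exact zeroExtend_of_le f (by simpa using hb)

end zeroExtend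

lemma lie_diagonal_apply {n R : Type*} [Fintype n] [DecidableEq n] [CommRing R]
    (A : Matrix n n R) (θ : n → R) (i j : n) :
    ⁅A, diagonal θ⁆ i j = A i j * (θ j - θ i) := by
  rw [Ring.lie_def, Matrix.sub_apply, mul_diagonal, diagonal_mul]
  ring

lemma eq_zero_of_two_step_recurrence {R : Type*} [Ring R] [NoZeroDivisors R] {p q s : ℕ → R}
    {n : ℕ} (hq : ∀ k, k + 2 ≤ n → q k ≠ 0)
    (hrec : ∀ k, k + 2 ≤ n → p k * s k + q k * s (k + 2) = 0)
    (h0 : s 0 = 0) (h1 : s 1 = 0) : ∀ k ≤ n, s k = 0 := by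
  refine Nat.twoStepInduction (fun _ => h0) (fun _ => h1) fun k ih _ hk => ?_
  have := hrec k hk
  rw [ih (by omega), mul_zero, zero_add] at this
  exact (mul_eq_zero.mp this).resolve_left (hq k hk)

structure IsTridiagonalWith {K : Type*} [Zero K] {d : ℕ}
    (A : Matrix (Fin (d+1)) (Fin (d+1)) K) (b c : ℕ → K) : Prop where
  sup : ∀ i j : Fin (d+1), (i : ℕ) + 1 = j → A i j = b i
  sub : ∀ i j : Fin (d+1), (i : ℕ) = j + 1 → A i j = c i
  zero : ∀ i j : Fin (d+1), (i : ℕ) + 1 < j ∨ (j : ℕ) + 1 < i → A i j = 0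

def gammaSeq {K : Type*} [Field K] (b c θ : ℕ → K) (k : ℕ) : K :=
  if Odd k then 0 else ∏ i ∈ (range k).filter Odd,
    c i * (θ (i-1) - θ i) / (b i * (θ i - θ (i+1)))

section gammaSeq

variable {K : Type*} [Field K] (b c θ : ℕ → K)

@[simp]
lemma gammaSeq_zero : gammaSeq b c θ 0 = 1 := by
  simp [gammaSeq]

lemma gammaSeq_of_odd {k : ℕ} (hk : Odd k) : gammaSeq b c θ k = 0 := by
  simp [gammaSeq, hk]

lemma gammaSeq_add_two {m : ℕ} (hm : Even m) :
    gammaSeq b c θ (m + 2) = gammaSeq b c θ m *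
      (c (m+1) * (θ m - θ (m+1)) / (b (m+1) * (θ (m+1) - θ (m+2)))) := by
  have hm' : ¬Odd m := Nat.not_odd_iff_even.mpr hm
  have hm2 : ¬Odd (m + 2) := Nat.not_odd_iff_even.mpr (hm.add even_two)
  simp only [gammaSeq, if_neg hm', if_neg hm2, prod_filter, prod_range_succ, if_pos hm.add_one,
    mul_one, Nat.add_sub_cancel]

lemma gammaSeq_recurrence {m : ℕ} (hm : Even m) (hb : b (m+1) ≠ 0) (hθ : θ (m+2) ≠ θ (m+1)) :
    c (m+1) * (θ m - θ (m+1)) * gammaSeq b c θ m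
      + b (m+1) * (θ (m+2) - θ (m+1)) * gammaSeq b c θ (m+2) = 0 := by
  have hθ' : θ (m+1) - θ (m+2) ≠ 0 := sub_ne_zero.mpr hθ.symm
  rw [gammaSeq_add_two b c θ hm]
  field_simp
  ring

end gammaSeq

section commutator

variable {K : Type*} [Field K] {d : ℕ} {A : Matrix (Fin (d+1)) (Fin (d+1)) K} {b c : ℕ → K}
  (θ : ℕ → K)

-- At `k = 0` the first summand vanishes because `0 - 1 = 0` in `ℕ`.
lemma IsTridiagonalWith.lie_diagonal_mulVec_apply (hA : IsTridiagonalWith A b c)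
    (x : Fin (d+1) → K) (k : Fin (d+1)) :
    (⁅A, diagonal fun i : Fin (d+1) => θ i⁆ *ᵥ x) k =
      c k * (θ (k-1) - θ k) * zeroExtend x (k-1) + b k * (θ (k+1) - θ k) * zeroExtend x (k+1) := by
  simp only [mulVec, dotProduct, lie_diagonal_apply]
  rw [sum_eq_zeroExtend_add_zeroExtend _ (a := k-1) (b := k+1) (by omega)]
  · congr 1
    · rcases Nat.eq_zero_or_pos k with h | h
      · have hk : k = 0 := Fin.ext h
        subst hk
        simp [zeroExtend]
      · have : (k:ℕ)-1 < d+1 := by omega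
        simp [zeroExtend, this, hA.sub k ⟨k-1, this⟩ (by dsimp only; omega)]
    · by_cases h : (k:ℕ)+1 < d+1
      · simp [zeroExtend, h, hA.sup k ⟨k+1, h⟩ rfl]
      · simp [zeroExtend_of_le _ (not_lt.mp h)]
  · intro j h1 h2
    rcases eq_or_ne j k with rfl | hjk
    · simp
    · rw [hA.zero k j (by omega), zero_mul, zero_mul]


lemma IsTridiagonalWith.mem_ker_lie_diagonal_iff (hA : IsTridiagonalWith A b c)
    (x : Fin (d+1) → K) :
    x ∈ LinearMap.ker (toLin' ⁅A, diagonal fun i : Fin (d+1) => θ i⁆) ↔ ∀ k : Fin (d+1),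
      c k * (θ (k-1) - θ k) * zeroExtend x (k-1) + b k * (θ (k+1) - θ k) * zeroExtend x (k+1)
        = 0 := by
  simp only [LinearMap.mem_ker, toLin'_apply, funext_iff, hA.lie_diagonal_mulVec_apply,
    Pi.zero_apply]

variable {θ}

lemma IsTridiagonalWith.eq_zero_of_mem_ker_lie_diagonal (hA : IsTridiagonalWith A b c)
    (hb : ∀ k < d, b k ≠ 0) (hθ : Set.InjOn θ (Set.Iic d)) {x : Fin (d+1) → K}
    (hx : x ∈ LinearMap.ker (toLin' ⁅A, diagonal fun i : Fin (d+1) => θ i⁆)) (h0 : x 0 = 0) :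
    x = 0 := by
  have hrow := (hA.mem_ker_lie_diagonal_iff θ x).mp hx
  have hθ' : ∀ k < d, θ (k+1) - θ k ≠ 0 := fun k hk => sub_ne_zero.mpr fun h => by
    have := hθ (Set.mem_Iic.mpr (by omega)) (Set.mem_Iic.mpr (by omega)) h
    omega
  have h1 : zeroExtend x 1 = 0 := by
    rcases Nat.lt_or_ge 0 d with hd | hd
    · have := hrow 0
      simp only [Fin.val_zero, zero_add, Nat.zero_sub, sub_self, mul_zero, zero_mul] at this
      exact (mul_eq_zero.mp this).resolve_left (mul_ne_zero (hb 0 hd) (hθ' 0 hd))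
    · exact zeroExtend_of_le x (by omega)
  have := eq_zero_of_two_step_recurrence (n := d) (s := zeroExtend x)
    (p := fun k => c (k+1) * (θ k - θ (k+1))) (q := fun k => b (k+1) * (θ (k+2) - θ (k+1)))
    (fun k hk => mul_ne_zero (hb _ (by omega)) (hθ' _ (by omega)))
    (fun k hk => by simpa using hrow ⟨k+1, by omega⟩) (by simpa [zeroExtend] using h0) h1
  funext i
  simpa using this i (by omega)

lemma IsTridiagonalWith.gammaSeq_mem_ker_lie_diagonal (hA : IsTridiagonalWith A b c)
    (hd : Even d) (hb : ∀ k < d, b k ≠ 0) (hθ : Set.InjOn θ (Set.Iic d)) :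
    (fun k : Fin (d+1) => gammaSeq b c θ k) ∈
      LinearMap.ker (toLin' ⁅A, diagonal fun i : Fin (d+1) => θ i⁆) := by
  have hodd : ∀ m, Odd m → zeroExtend (fun k : Fin (d+1) => gammaSeq b c θ k) m = 0 := by
    intro m hm
    unfold zeroExtend
    split_ifs <;> simp [gammaSeq_of_odd _ _ _ hm]
  rw [hA.mem_ker_lie_diagonal_iff]
  intro k
  rcases Nat.even_or_odd k with hk | hk
  · rw [hodd (k+1) hk.add_one, mul_zero, add_zero]
    rcases Nat.eq_zero_or_pos k with h | h
    · simp [h]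
    · rw [hodd (k-1) (Nat.Even.sub_odd h hk odd_one), mul_zero]
  · obtain ⟨m, hm⟩ := hk
    have hmd : 2 * m + 2 ≤ d := by
      obtain ⟨e, he⟩ := hd
      have := k.isLt
      omega
    rw [hm, Nat.add_sub_cancel, zeroExtend_of_lt _ (by omega), zeroExtend_of_lt _ (by omega)]
    exact gammaSeq_recurrence b c θ (even_two_mul m) (hb _ (by omega)) fun h => by
      have := hθ (Set.mem_Iic.mpr (by omega)) (Set.mem_Iic.mpr (by omega)) h
      omega

lemma IsTridiagonalWith.ker_lie_diagonal_eq_span (hA : IsTridiagonalWith A b c)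
    (hd : Even d) (hb : ∀ k < d, b k ≠ 0) (hθ : Set.InjOn θ (Set.Iic d)) :
    LinearMap.ker (toLin' ⁅A, diagonal fun i : Fin (d+1) => θ i⁆) =
      Submodule.span K {fun k : Fin (d+1) => gammaSeq b c θ k} := by
  have hγ := hA.gammaSeq_mem_ker_lie_diagonal hd hb hθ
  refine le_antisymm (fun x hx => ?_) ((Submodule.span_singleton_le_iff_mem _ _).mpr hγ)
  rw [Submodule.mem_span_singleton]
  refine ⟨x 0, (sub_eq_zero.mp ?_).symm⟩
  exact hA.eq_zero_of_mem_ker_lie_diagonal hb hθ (sub_mem hx (Submodule.smul_mem _ _ hγ))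
    (by simp)

end commutator

/-- for d even, the null space of A A* - A* A has dimension 1,
spanned by the stated vector. -/
theorem stmt4 {d : ℕ} {K : Type*} [Field K]
    (b c θ : ℕ → K) (A : Matrix (Fin (d+1)) (Fin (d+1)) K)
    (hsup : ∀ i j : Fin (d+1), (i : ℕ) + 1 = (j : ℕ) → A i j = b i)
    (hsub : ∀ i j : Fin (d+1), (i : ℕ) = (j : ℕ) + 1 → A i j = c i)
    (hzero : ∀ i j : Fin (d+1), (i : ℕ) + 1 < (j : ℕ) ∨ (j : ℕ) + 1 < (i : ℕ) → A i j = 0)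
    (hbc : ∀ i : ℕ, 1 ≤ i → i ≤ d → b (i-1) * c i ≠ 0)
    (hθ : ∀ i j : ℕ, i ≤ d → j ≤ d → θ i = θ j → i = j)
    (hd : Even d)
    (As : Matrix (Fin (d+1)) (Fin (d+1)) K)
    (hAs : As = Matrix.diagonal (fun i : Fin (d+1) => θ (i : ℕ)))
    (v : Fin (d+1) → K)
    (hv : v = fun k : Fin (d+1) => if Odd (k : ℕ) then 0 else
      ∏ i ∈ (Finset.range (k : ℕ)).filter (fun i => Odd i),
        c i * (θ (i-1) - θ i) / (b i * (θ i - θ (i+1)))) :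
    Module.finrank K (LinearMap.ker (Matrix.toLin' (A * As - As * A))) = 1 ∧
    LinearMap.ker (Matrix.toLin' (A * As - As * A)) = Submodule.span K {v} := by
  subst hAs hv
  have hb : ∀ k < d, b k ≠ 0 := fun k hk h => hbc (k+1) (by omega) hk (by simp [h])
  have hker := IsTridiagonalWith.ker_lie_diagonal_eq_span ⟨hsup, hsub, hzero⟩ hd hb
    fun i hi j hj => hθ i j hi hj
  rw [Ring.lie_def] at hker
  refine ⟨?_, hker⟩
  rw [hker]
  exact finrank_span_singleton fun h => by simpa using congrFun h 0
end

section
/- Let q be a nonzero element of a field K and d ≥ 3 an integer. Suppose θ*_0,...,θ*_d are pairwise distinct elements of K such that (θ*_{i-2} - θ*_{i+1})/(θ*_{i-1} - θ*_i) = q^2 + q^{-2} + 1 for 2 ≤ i ≤ d-1, and suppose q^2 + q^{-2} ≠ 2 and q^2 + q^{-2} ≠ -2. Then q^{2i} ≠ 1 for 1 ≤ i ≤ d. -/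
open Finset

/-- under the three-term ratio condition with β ≠ ±2, q^{2i} ≠ 1
for 1 ≤ i ≤ d. -/
theorem stmt7 {K : Type*} [Field K] (q : K) (hq : q ≠ 0)
    (d : ℕ) (hd : 3 ≤ d) (θ : ℕ → K)
    (hdist : ∀ i j : ℕ, i ≤ d → j ≤ d → θ i = θ j → i = j)
    (hratio : ∀ i : ℕ, 2 ≤ i → i ≤ d - 1 →
      (θ (i-2) - θ (i+1)) / (θ (i-1) - θ i) = q ^ 2 + q⁻¹ ^ 2 + 1)
    (hβ2 : q ^ 2 + q⁻¹ ^ 2 ≠ 2) (hβ2' : q ^ 2 + q⁻¹ ^ 2 ≠ -2) :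
    ∀ i : ℕ, 1 ≤ i → i ≤ d → q ^ (2 * i) ≠ 1 := by
  intro n hn1 hnd hqn
  obtain ⟨r, hr⟩ : ∃ r : K, r = q ^ 2 := ⟨_, rfl⟩
  have hr0 : r ≠ 0 := hr ▸ pow_ne_zero _ hq
  have hinv : q⁻¹ ^ 2 = r⁻¹ := by rw [inv_pow, hr]
  have hu : r * r⁻¹ = 1 := mul_inv_cancel₀ hr0
  have hr1 : r ≠ 1 := by
    intro h
    apply hβ2
    rw [← hr, hinv, h]; norm_num
  have hrm1 : r ≠ -1 := by
    intro h
    apply hβ2'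
    rw [← hr, hinv, h]; norm_num
  have h1 : r - 1 ≠ 0 := sub_ne_zero.mpr hr1
  have h2 : r + 1 ≠ 0 := by
    intro h; exact hrm1 (eq_neg_of_add_eq_zero_left h)
  have h3 : r - r⁻¹ ≠ 0 := by
    intro h
    have hrr : r = r⁻¹ := sub_eq_zero.mp h
    have hsq : r * r = 1 := by
      nth_rewrite 2 [hrr]
      exact mul_inv_cancel₀ hr0
    have : (r - 1) * (r + 1) = 0 := by linear_combination hsq
    rcases mul_eq_zero.mp this with h' | h'
    · exact h1 h'
    · exact h2 h'
  have h4 : r⁻¹ - 1 ≠ 0 := by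
    intro h
    exact hr1 (inv_eq_one.mp (sub_eq_zero.mp h))
  have h5 : r⁻¹ - r ≠ 0 := by
    intro h; apply h3; linear_combination -h
  -- recurrence
  have hrec : ∀ j : ℕ, j + 3 ≤ d →
      θ (j+3) = θ j - (r + r⁻¹ + 1) * (θ (j+1) - θ (j+2)) := by
    intro j hj
    have hth := hratio (j+2) (by omega) (by omega)
    have e1 : j + 2 - 2 = j := by omega
    have e2 : j + 2 - 1 = j + 1 := by omega
    have e3 : j + 2 + 1 = j + 3 := by omega
    rw [e1, e2, e3, ← hr, hinv] at hth
    have hne : θ (j+1) - θ (j+2) ≠ 0 := by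
      intro h
      have := hdist (j+1) (j+2) (by omega) (by omega) (sub_eq_zero.mp h)
      omega
    rw [div_eq_iff hne] at hth
    linear_combination -hth
  obtain ⟨B, eB⟩ : ∃ B : K,
      B * ((r - 1) * (r - r⁻¹)) = (θ 2 - θ 1) - r⁻¹ * (θ 1 - θ 0) :=
    ⟨_, div_mul_cancel₀ _ (mul_ne_zero h1 h3)⟩
  obtain ⟨C, eC⟩ : ∃ C : K,
      C * ((r⁻¹ - 1) * (r⁻¹ - r)) = (θ 2 - θ 1) - r * (θ 1 - θ 0) :=
    ⟨_, div_mul_cancel₀ _ (mul_ne_zero h4 h5)⟩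
  obtain ⟨A, hA⟩ : ∃ A : K, A = θ 0 - B - C := ⟨_, rfl⟩
  have key : ∀ i, i ≤ d → θ i = A + B * r ^ i + C * r⁻¹ ^ i := by
    intro i
    induction i using Nat.strong_induction_on with
    | _ i ih =>
      match i with
      | 0 =>
        intro _
        rw [hA]; ring
      | 1 =>
        intro _
        have step : (r - r⁻¹) *
            ((θ 1 - θ 0) - (B * (r - 1) + C * (r⁻¹ - 1))) = 0 := by
          linear_combination -eB + eC
        have h0 : (θ 1 - θ 0) - (B * (r - 1) + C * (r⁻¹ - 1)) = 0 :=
          (mul_eq_zero.mp step).resolve_left h3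
        linear_combination h0 - hA
      | 2 =>
        intro _
        have step : (r - r⁻¹) *
            ((θ 2 - θ 0) - (B * (r ^ 2 - 1) + C * (r⁻¹ ^ 2 - 1))) = 0 := by
          linear_combination -(r + 1) * eB + (r⁻¹ + 1) * eC
        have h0 : (θ 2 - θ 0) - (B * (r ^ 2 - 1) + C * (r⁻¹ ^ 2 - 1)) = 0 :=
          (mul_eq_zero.mp step).resolve_left h3
        linear_combination h0 - hA
      | (j+3) =>
        intro h
        rw [hrec j h, ih j (by omega) (by omega), ih (j+1) (by omega) (by omega),
          ih (j+2) (by omega) (by omega)]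
        have e : ∀ k : ℕ, r ^ (k+1) = r ^ k * r := fun k => pow_succ r k
        linear_combination
          (B * r ^ j * (r - 1) + C * r⁻¹ ^ j * (r⁻¹ - 1)) * hu
  have hrn : r ^ n = 1 := by
    rw [hr, ← pow_mul]; exact hqn
  have hrn' : r⁻¹ ^ n = 1 := by
    rw [inv_pow, hrn, inv_one]
  have hθn : θ n = θ 0 := by
    rw [key n hnd, key 0 (by omega), hrn, hrn']
    norm_num
  have := hdist n 0 hnd (by omega) hθn
  omega
end

section
/- Let q be a nonzero element of a field K and d ≥ 3 an integer. Suppose θ*_0,...,θ*_d are pairwise distinct elements of K satisfying (θ*_{i-2} - θ*_{i+1})/(θ*_{i-1} - θ*_i) = q^2 + q^{-2} + 1 for 2 ≤ i ≤ d-1, with q^2 + q^{-2} ≠ ±2. Then for all integers 0 ≤ i,j,r,s ≤ d with i + j = r + s, i ≠ j, r ≠ s, one has (θ*_i - θ*_j)/(θ*_r - θ*_s) = (q^{2i} - q^{2j})/(q^{2r} - q^{2s}), and the denominators are nonzero. -/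
/-!
Put `x = q²` and `β = x + x⁻¹`. Clearing the denominators in the ratio condition gives the
linear recurrence `θ (n+3) = θ n + (β + 1) (θ (n+2) - θ (n+1))`, whose characteristic
polynomial is `(t - 1)(t - x)(t - x⁻¹)`. Since `β ≠ ±2` these roots are distinct, so
`θ n = C + A xⁿ + B x⁻ⁿ`. Then `θ i - θ j = (xⁱ - xʲ)(A - B x^{-(i+j)})`, and the second
factor cancels in the ratio because it only depends on `i + j`.
-/

section

variable {K : Type*} [Field K]

def powCombination (x A B C : K) (n : ℕ) : K := C + A * x ^ n + B * x⁻¹ ^ n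

theorem powCombination_sub {x : K} (hx : x ≠ 0) (A B C : K) (i j : ℕ) :
    powCombination x A B C i - powCombination x A B C j =
      (x ^ i - x ^ j) * (A - B * x⁻¹ ^ (i + j)) := by
  simp only [powCombination, inv_pow]
  field_simp
  ring

theorem powCombination_recurrence {x : K} (hx : x ≠ 0) (A B C : K) (n : ℕ) :
    powCombination x A B C (n + 3) = powCombination x A B C n +
      (x + x⁻¹ + 1) * (powCombination x A B C (n + 2) - powCombination x A B C (n + 1)) := by
  simp only [powCombination, inv_pow]
  field_simp
  ring

theorem exists_powCombination_eq {x : K} (hx : x ≠ 0) (hx_one : x ≠ 1) (hx_neg_one : x ≠ -1)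
    (a₀ a₁ a₂ : K) : ∃ A B C : K, powCombination x A B C 0 = a₀ ∧
      powCombination x A B C 1 = a₁ ∧ powCombination x A B C 2 = a₂ := by
  have hx_one' : x - 1 ≠ 0 := sub_ne_zero.mpr hx_one
  have hx_neg_one' : x + 1 ≠ 0 := by rwa [← sub_neg_eq_add, sub_ne_zero]
  set u := (a₁ - a₀) / (x - 1)
  set v := (a₂ - a₁) / (x - 1)
  -- `u = A - B x⁻¹` and `v = A x - B x⁻²` are the first differences divided by `x - 1`
  set A := (x * v - u) / ((x - 1) * (x + 1))
  refine ⟨A, x * (A - u), a₀ - A - x * (A - u), ?_, ?_, ?_⟩ <;>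
  · simp only [powCombination, A, u, v, inv_pow]
    field_simp
    ring

theorem eq_powCombination_of_recurrence {x : K} (hx : x ≠ 0) (hx_one : x ≠ 1)
    (hx_neg_one : x ≠ -1) {d : ℕ} {f : ℕ → K}
    (hf : ∀ n, n + 3 ≤ d → f (n + 3) = f n + (x + x⁻¹ + 1) * (f (n + 2) - f (n + 1))) :
    ∃ A B C : K, ∀ n ≤ d, f n = powCombination x A B C n := by
  obtain ⟨A, B, C, h₀, h₁, h₂⟩ :=
    exists_powCombination_eq hx hx_one hx_neg_one (f 0) (f 1) (f 2)
  refine ⟨A, B, C, fun n hn => ?_⟩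
  induction n using Nat.strong_induction_on with
  | _ n ih =>
    match n, ih with
    | 0, _ => exact h₀.symm
    | 1, _ => exact h₁.symm
    | 2, _ => exact h₂.symm
    | m + 3, ih =>
      rw [hf m hn, powCombination_recurrence hx, ih m (by omega) (by omega),
        ih (m + 1) (by omega) (by omega), ih (m + 2) (by omega) (by omega)]

theorem sub_div_sub_eq_of_eq_powCombination {x A B C : K} (hx : x ≠ 0) {f : ℕ → K} {d : ℕ}
    (hf : ∀ n ≤ d, f n = powCombination x A B C n) {i j r s : ℕ} (hi : i ≤ d) (hj : j ≤ d)
    (hr : r ≤ d) (hs : s ≤ d) (hsum : i + j = r + s) (hrs : f r - f s ≠ 0) :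
    x ^ r - x ^ s ≠ 0 ∧ (f i - f j) / (f r - f s) = (x ^ i - x ^ j) / (x ^ r - x ^ s) := by
  rw [hf i hi, hf j hj, hf r hr, hf s hs, powCombination_sub hx, powCombination_sub hx,
    hsum] at *
  exact ⟨left_ne_zero_of_mul hrs, mul_div_mul_right _ _ (right_ne_zero_of_mul hrs)⟩

end

theorem stmt8_general {K : Type*} [Field K] (q : K) (hq : q ≠ 0)
    (d : ℕ) (θ : ℕ → K)
    (hdist : ∀ i j : ℕ, i ≤ d → j ≤ d → θ i = θ j → i = j)
    (hratio : ∀ i : ℕ, 2 ≤ i → i ≤ d - 1 →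
      (θ (i-2) - θ (i+1)) / (θ (i-1) - θ i) = q ^ 2 + q⁻¹ ^ 2 + 1)
    (hβ2 : q ^ 2 + q⁻¹ ^ 2 ≠ 2) (hβ2' : q ^ 2 + q⁻¹ ^ 2 ≠ -2) :
    ∀ i j r s : ℕ, i ≤ d → j ≤ d → r ≤ d → s ≤ d →
      i + j = r + s → i ≠ j → r ≠ s →
      θ r - θ s ≠ 0 ∧ q ^ (2 * r) - q ^ (2 * s) ≠ 0 ∧
      (θ i - θ j) / (θ r - θ s) =
        (q ^ (2 * i) - q ^ (2 * j)) / (q ^ (2 * r) - q ^ (2 * s)) := by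
  intro i j r s hi hj hr hs hsum _ hrs
  have hθ : ∀ m n, m ≤ d → n ≤ d → m ≠ n → θ m - θ n ≠ 0 := fun m n hm hn hmn =>
    sub_ne_zero.mpr fun h => hmn (hdist m n hm hn h)
  rw [inv_pow] at hβ2 hβ2'
  have hx : q ^ 2 ≠ 0 := pow_ne_zero 2 hq
  have hx_one : q ^ 2 ≠ 1 := fun h => hβ2 (by rw [h]; norm_num)
  have hx_neg_one : q ^ 2 ≠ -1 := fun h => hβ2' (by rw [h]; norm_num)
  have hrec : ∀ n, n + 3 ≤ d →
      θ (n + 3) = θ n + (q ^ 2 + (q ^ 2)⁻¹ + 1) * (θ (n + 2) - θ (n + 1)) := fun n hn => by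
    have h := hratio (n + 2) (by omega) (by omega)
    rw [div_eq_iff (hθ _ _ (by omega) (by omega) (by omega)), inv_pow] at h
    simp only [Nat.add_sub_cancel, show n + 2 - 1 = n + 1 by omega] at h
    linear_combination -h
  obtain ⟨A, B, C, hform⟩ := eq_powCombination_of_recurrence hx hx_one hx_neg_one hrec
  simp only [pow_mul]
  exact ⟨hθ r s hr hs hrs,
    sub_div_sub_eq_of_eq_powCombination hx hform hi hj hr hs hsum (hθ r s hr hs hrs)⟩

/-- ratio of differences of the θ's equals the corresponding
ratio of differences of powers of q², with nonzero denominators. -/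
theorem stmt8 {K : Type*} [Field K] (q : K) (hq : q ≠ 0)
    (d : ℕ) (hd : 3 ≤ d) (θ : ℕ → K)
    (hdist : ∀ i j : ℕ, i ≤ d → j ≤ d → θ i = θ j → i = j)
    (hratio : ∀ i : ℕ, 2 ≤ i → i ≤ d - 1 →
      (θ (i-2) - θ (i+1)) / (θ (i-1) - θ i) = q ^ 2 + q⁻¹ ^ 2 + 1)
    (hβ2 : q ^ 2 + q⁻¹ ^ 2 ≠ 2) (hβ2' : q ^ 2 + q⁻¹ ^ 2 ≠ -2) :
    ∀ i j r s : ℕ, i ≤ d → j ≤ d → r ≤ d → s ≤ d →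
      i + j = r + s → i ≠ j → r ≠ s →
      θ r - θ s ≠ 0 ∧ q ^ (2 * r) - q ^ (2 * s) ≠ 0 ∧
      (θ i - θ j) / (θ r - θ s) =
        (q ^ (2 * i) - q ^ (2 * j)) / (q ^ (2 * r) - q ^ (2 * s)) :=
  stmt8_general q hq d θ hdist hratio hβ2 hβ2'
end

section
/- Let d ≥ 3 and suppose θ*_0,...,θ*_d are pairwise distinct elements of a field K with characteristic p > 2 satisfying (θ*_{i-2} - θ*_{i+1})/(θ*_{i-1} - θ*_i) = 3 for 2 ≤ i ≤ d-1 (the case β = 2). Then d < p. -/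
open Finset

/-- in the case β = 2 with char K = p > 2, one has d < p. -/
theorem stmt9 {K : Type*} [Field K] (p : ℕ) [CharP K p] (hp : 2 < p)
    (d : ℕ) (hd : 3 ≤ d) (θ : ℕ → K)
    (hdist : ∀ i j : ℕ, i ≤ d → j ≤ d → θ i = θ j → i = j)
    (hratio : ∀ i : ℕ, 2 ≤ i → i ≤ d - 1 →
      (θ (i-2) - θ (i+1)) / (θ (i-1) - θ i) = 3) :
    d < p := by
  by_contra hcon
  push_neg at hcon
  have h2 : (2 : K) ≠ 0 := by
    intro h
    have : ((2 : ℕ) : K) = 0 := by exact_mod_cast h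
    have := Nat.le_of_dvd (by norm_num) ((CharP.cast_eq_zero_iff K p 2).mp this)
    omega
  set a : K := (θ 2 - 2*θ 1 + θ 0)/2 with ha
  set b : K := θ 1 - θ 0 - a with hb
  have key : ∀ i, i ≤ d → θ i = a * (i:K)^2 + b * (i:K) + θ 0 := by
    intro i
    induction i using Nat.strong_induction_on with
    | _ i ih =>
      match i with
      | 0 => intro _; push_cast; ring
      | 1 => intro _; rw [hb]; push_cast; ring
      | 2 =>
        intro _
        rw [hb, ha]
        push_cast
        field_simp
        ring
      | (n+3) =>
        intro hle
        have hne : θ (n+1) - θ (n+2) ≠ 0 := by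
          intro h
          have h' : θ (n+1) = θ (n+2) := sub_eq_zero.mp h
          have := hdist (n+1) (n+2) (by omega) (by omega) h'
          omega
        have h1 : (θ n - θ (n+3)) / (θ (n+1) - θ (n+2)) = 3 := by
          have := hratio (n+2) (by omega) (by omega)
          simpa using this
        have h1' : θ n - θ (n+3) = 3 * (θ (n+1) - θ (n+2)) := by
          field_simp at h1
          linear_combination h1
        have e0 := ih n (by omega) (by omega)
        have e1 := ih (n+1) (by omega) (by omega)
        have e2 := ih (n+2) (by omega) (by omega)
        have h3 : θ (n+3) = θ n - 3*θ (n+1) + 3*θ (n+2) := by linear_combination -h1'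
        rw [h3, e0, e1, e2]
        push_cast
        ring
  have hp0 : ((p:ℕ):K) = 0 := CharP.cast_eq_zero K p
  have hθp : θ p = θ 0 := by
    rw [key p hcon, key 0 (by omega)]
    simp [hp0]
  have := hdist 0 p (by omega) hcon hθp.symm
  omega
end

section
/- Let d ≥ 3 be an integer and suppose θ*_0,...,θ*_d are pairwise distinct elements of a field K with characteristic p > 2 satisfying (θ*_{i-2} - θ*_{i+1})/(θ*_{i-1} - θ*_i) = -1 for 2 ≤ i ≤ d-1 (the case β = -2). Then d < 2p. -/
open Finset

/-- in the case β = -2 with char K = p > 2, one has d < 2p. -/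
theorem stmt10 {K : Type*} [Field K] (p : ℕ) [CharP K p] (hp : 2 < p)
    (d : ℕ) (hd : 3 ≤ d) (θ : ℕ → K)
    (hdist : ∀ i j : ℕ, i ≤ d → j ≤ d → θ i = θ j → i = j)
    (hratio : ∀ i : ℕ, 2 ≤ i → i ≤ d - 1 →
      (θ (i-2) - θ (i+1)) / (θ (i-1) - θ i) = -1) :
    d < 2 * p := by
  -- basic recurrence
  have hrec : ∀ i : ℕ, i + 3 ≤ d → θ (i+3) = θ i + θ (i+1) - θ (i+2) := by
    intro i hi
    have h := hratio (i+2) (by omega) (by omega)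
    have e1 : i + 2 - 2 = i := rfl
    have e2 : i + 2 - 1 = i + 1 := rfl
    have e3 : i + 2 + 1 = i + 3 := rfl
    rw [e1, e2, e3] at h
    have hne : θ (i+1) - θ (i+2) ≠ 0 := by
      intro hz
      have : θ (i+1) = θ (i+2) := by linear_combination hz
      have := hdist (i+1) (i+2) (by omega) (by omega) this
      omega
    have h' := (div_eq_iff hne).mp h
    linear_combination -h'
  -- constant even-index differences
  have hdiff : ∀ k : ℕ, 2*k + 2 ≤ d → θ (2*k+2) - θ (2*k) = θ 2 - θ 0 := by
    intro k
    induction k with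
    | zero => intro _; norm_num
    | succ k ih =>
      intro hk
      have h1 := hrec (2*k) (by omega)
      have h2 := hrec (2*k+1) (by omega)
      have ihe := ih (by omega)
      have e1 : 2*(k+1) = 2*k+2 := by ring
      have e2 : 2*(k+1)+2 = 2*k+4 := by ring
      rw [e2, e1]
      have e3 : 2*k+1+3 = 2*k+4 := by ring
      have e4 : 2*k+1+1 = 2*k+2 := by ring
      have e5 : 2*k+1+2 = 2*k+3 := by ring
      rw [e3, e4, e5] at h2
      linear_combination h2 - h1 + ihe
  -- closed form on even indices
  have hform : ∀ k : ℕ, 2*k ≤ d → θ (2*k) = θ 0 + (k : K) * (θ 2 - θ 0) := by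
    intro k
    induction k with
    | zero => intro _; norm_num
    | succ k ih =>
      intro hk
      have hd2 := hdiff k (by omega)
      have ihe := ih (by omega)
      have e2 : 2*(k+1) = 2*k+2 := by ring
      rw [e2]
      push_cast
      linear_combination hd2 + ihe
  by_contra hcon
  push_neg at hcon
  have hθ : θ (2*p) = θ 0 := by
    have := hform p (by omega)
    rw [this, CharP.cast_eq_zero K p]
    ring
  have := hdist (2*p) 0 (by omega) (by omega) hθ
  omega
end

section
/- Let q be a nonzero element of a field K with q^2 ≠ 1 and q^{2i} ≠ 1 for 1 ≤ i ≤ d. Let m be a nonnegative integer with 2m + 1 ≤ d. Then ∏_{0 ≤ ℓ < k ≤ m} (q^{2(2ℓ+1)} - q^{2(2k)})/(q^{2(2ℓ)} - q^{2(2k+1)}) = ∏_{k=0}^{m} 1/[2k+1]_q. -/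
open Finset

/-- The symmetric q-integer `[n]_q = q^{n-1} + q^{n-3} + ... + q^{1-n}`. -/
def qint {K : Type*} [Field K] (q : K) (n : ℕ) : K :=
  ∑ i ∈ Finset.range n, q ^ (n - 1 - i) * q⁻¹ ^ i

/-! Writing `[n] = (qⁿ - q⁻ⁿ)/(q - q⁻¹)`, the factor indexed by `l < k` equals `[2j+1]/[2j+3]`
with `j = k - 1 - l`, so the inner product over `l` telescopes to `[1]/[2k+1] = 1/[2k+1]`. -/

theorem Finset.prod_range_div'_of_ne_zero {K : Type*} [Field K] {f : ℕ → K} {n : ℕ}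
    (hf : ∀ i ≤ n, f i ≠ 0) : ∏ i ∈ range n, f i / f (i + 1) = f 0 / f n := by
  induction n with
  | zero => simp [div_self (hf 0 (by omega))]
  | succ n ih =>
    rw [prod_range_succ, ih fun i hi => hf i (by omega),
      div_mul_div_cancel₀ (hf n (by omega))]

section QInt

variable {K : Type*} [Field K] {q : K}

@[simp]
theorem qint_one (q : K) : qint q 1 = 1 := by
  simp [qint]

theorem qint_mul_sub_inv (q : K) (n : ℕ) : qint q n * (q - q⁻¹) = q ^ n - q⁻¹ ^ n := by
  have h := geom_sum₂_mul q⁻¹ q n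
  simp only [mul_comm (q⁻¹ ^ _)] at h
  rw [qint, ← neg_sub q⁻¹ q, mul_neg, h, neg_sub]

theorem qint_ne_zero (hq : q ≠ 0) {n : ℕ} (h : q ^ (2 * n) ≠ 1) : qint q n ≠ 0 := by
  intro h0
  have hpow : q ^ n = q⁻¹ ^ n := by
    rw [← sub_eq_zero, ← qint_mul_sub_inv, h0, zero_mul]
  apply h
  rw [two_mul, pow_add]
  nth_rewrite 2 [hpow]
  rw [← mul_pow, mul_inv_cancel₀ hq, one_pow]

theorem pow_add_two_mul_sub_pow (hq : q ≠ 0) (a n : ℕ) :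
    q ^ (a + 2 * n) - q ^ a = q ^ (a + n) * (q - q⁻¹) * qint q n := by
  rw [mul_assoc, mul_comm (q - q⁻¹), qint_mul_sub_inv, inv_pow]
  field_simp
  ring

theorem sub_inv_ne_zero (hq : q ≠ 0) (h1 : q ^ 2 ≠ 1) : q - q⁻¹ ≠ 0 := by
  intro h
  apply h1
  rw [sq]
  nth_rewrite 2 [sub_eq_zero.1 h]
  exact mul_inv_cancel₀ hq

theorem pow_sub_pow_div_pow_sub_pow (hq : q ≠ 0) (h1 : q ^ 2 ≠ 1) (l j : ℕ) :
    (q ^ (2 * (2 * l + 1)) - q ^ (2 * (2 * (l + j + 1)))) /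
        (q ^ (2 * (2 * l)) - q ^ (2 * (2 * (l + j + 1) + 1)))
      = qint q (2 * j + 1) / qint q (2 * (j + 1) + 1) := by
  have hnum := pow_add_two_mul_sub_pow hq (4 * l + 2) (2 * j + 1)
  have hden := pow_add_two_mul_sub_pow hq (4 * l) (2 * (j + 1) + 1)
  rw [show 4 * l + (2 * (j + 1) + 1) = 4 * l + 2 + (2 * j + 1) by ring] at hden
  rw [show 2 * (2 * l + 1) = 4 * l + 2 by ring, show 2 * (2 * l) = 4 * l by ring,
    show 2 * (2 * (l + j + 1)) = 4 * l + 2 + 2 * (2 * j + 1) by ring,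
    show 2 * (2 * (l + j + 1) + 1) = 4 * l + 2 * (2 * (j + 1) + 1) by ring,
    ← neg_sub _ (q ^ (4 * l + 2)), ← neg_sub _ (q ^ (4 * l)), neg_div_neg_eq, hnum, hden]
  exact mul_div_mul_left _ _ (mul_ne_zero (pow_ne_zero _ hq) (sub_inv_ne_zero hq h1))

theorem prod_range_pow_sub_pow_div_pow_sub_pow (hq : q ≠ 0) (h1 : q ^ 2 ≠ 1) {k : ℕ}
    (hk : ∀ i ≤ k, qint q (2 * i + 1) ≠ 0) :
    ∏ l ∈ range k, (q ^ (2 * (2 * l + 1)) - q ^ (2 * (2 * k))) /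
        (q ^ (2 * (2 * l)) - q ^ (2 * (2 * k + 1)))
      = (qint q (2 * k + 1))⁻¹ := by
  set f : ℕ → K := fun i => qint q (2 * i + 1)
  have hfactor : ∀ l ∈ range k, (q ^ (2 * (2 * l + 1)) - q ^ (2 * (2 * k))) /
      (q ^ (2 * (2 * l)) - q ^ (2 * (2 * k + 1))) = f (k - 1 - l) / f (k - 1 - l + 1) := by
    intro l hl
    obtain ⟨j, rfl⟩ : ∃ j, k = l + j + 1 := ⟨k - 1 - l, by simp at hl; omega⟩
    rw [show l + j + 1 - 1 - l = j by omega]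
    exact pow_sub_pow_div_pow_sub_pow hq h1 l j
  rw [prod_congr rfl hfactor, prod_range_reflect (fun i => f i / f (i + 1)),
    prod_range_div'_of_ne_zero hk]
  simp only [mul_zero, zero_add, qint_one, one_div]

end QInt

/-- the telescoping product identity for powers of q². -/
theorem stmt12 {K : Type*} [Field K] (q : K) (hq : q ≠ 0)
    (h1 : q ^ 2 ≠ 1) (d : ℕ)
    (h2 : ∀ i : ℕ, 1 ≤ i → i ≤ d → q ^ (2 * i) ≠ 1)
    (m : ℕ) (hm : 2 * m + 1 ≤ d) :
    ∏ k ∈ Finset.range (m+1), ∏ l ∈ Finset.range k,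
        (q ^ (2 * (2 * l + 1)) - q ^ (2 * (2 * k))) /
        (q ^ (2 * (2 * l)) - q ^ (2 * (2 * k + 1)))
      = ∏ k ∈ Finset.range (m+1), (qint q (2 * k + 1))⁻¹ := by
  refine prod_congr rfl fun k hk => prod_range_pow_sub_pow_div_pow_sub_pow hq h1 fun i hi => ?_
  have hkm : k ≤ m := Nat.lt_succ_iff.mp (mem_range.mp hk)
  exact qint_ne_zero hq (h2 _ (by omega) (by omega))
end

section
/- Let θ*_0,...,θ*_d be pairwise distinct elements of a field K with d odd, and set m = (d-1)/2, τ*_i(λ) = ∏_{h=0}^{i-1}(λ - θ*_h) and η*_i(λ) = ∏_{h=0}^{i-1}(λ - θ*_{d-h}). Then ∏_{1 ≤ i ≤ d, i odd} (θ*_{i-1} - θ*_i)^2 · τ*_{i-1}(θ*_{i-1}) η*_{d-i}(θ*_i) / (τ*_i(θ*_i) η*_{d-i+1}(θ*_{i-1})) = (-1)^{m+1} Ψ^2, where Ψ = ∏_{0 ≤ ℓ < k ≤ m} (θ*_{2ℓ+1} - θ*_{2k})/(θ*_{2ℓ} - θ*_{2k+1}). -/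
/-!
Write `d = 2m + 1` and group the nodes into the pairs `θ_{2l}, θ_{2l+1}`, with
`p_l(λ) = (λ - θ_{2l})(λ - θ_{2l+1})`. Then `τ*_{2k} = ∏_{l<k} p_l` and
`η*_{d-2k-1} = ∏_{k<r≤m} p_r`, so after cancelling the last factors of `τ*_{2k+1}` and
`η*_{d-2k}` against `(θ_{2k} - θ_{2k+1})²`, the `k`-th factor is
`-∏_{l<k} q(k,l) / ∏_{k<r≤m} q(k,r)` with `q(k,l) = p_l(θ_{2k}) / p_l(θ_{2k+1})`.
Over all `k` every pair `l < k` contributes `q(k,l) / q(l,k)`, which is the square of the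
`(l,k)` factor of `Ψ`.
-/

open Finset

namespace Finset

variable {M : Type*} [CommMonoid M]

theorem prod_range_two_mul (f : ℕ → M) (n : ℕ) :
    ∏ j ∈ range (2 * n), f j = ∏ i ∈ range n, f (2 * i) * f (2 * i + 1) := by
  induction n with
  | zero => simp
  | succ n ih => rw [Nat.mul_succ, prod_range_succ, prod_range_succ, prod_range_succ, ih, mul_assoc]

theorem prod_Ico_two_mul (f : ℕ → M) (a b : ℕ) :
    ∏ j ∈ Ico (2 * a) (2 * b), f j = ∏ i ∈ Ico a b, f (2 * i) * f (2 * i + 1) := by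
  rw [prod_Ico_eq_prod_range, prod_Ico_eq_prod_range, ← Nat.mul_sub, prod_range_two_mul]
  simp only [mul_add, add_assoc]

theorem prod_filter_odd_range_two_mul_s14 (f : ℕ → M) (n : ℕ) :
    ∏ i ∈ (range (2 * n)).filter Odd, f i = ∏ k ∈ range n, f (2 * k + 1) := by
  rw [prod_filter, prod_range_two_mul]
  simp [Nat.odd_iff]

/-- The product right of the diagonal is the one below it with the indices swapped. -/
theorem prod_range_div_prod_Ico {G : Type*} [DivisionCommMonoid G] (f : ℕ → ℕ → G)
    (n : ℕ) :
    ∏ k ∈ range n, (∏ l ∈ range k, f k l) / ∏ r ∈ Ico (k + 1) n, f k r =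
      ∏ k ∈ range n, ∏ l ∈ range k, f k l / f l k := by
  have hswap : ∏ k ∈ range n, ∏ r ∈ Ico (k + 1) n, f k r =
      ∏ k ∈ range n, ∏ l ∈ range k, f l k :=
    prod_comm' fun k r => by simp only [mem_range, mem_Ico]; omega
  simp only [prod_div_distrib, hswap]

end Finset

section DualPolynomials

variable {K : Type*} [Field K] (θ : ℕ → K)

def tauStar (i : ℕ) (x : K) : K := ∏ h ∈ range i, (x - θ h)

def etaStar (d i : ℕ) (x : K) : K := ∏ h ∈ range i, (x - θ (d - h))

def pairPoly (l : ℕ) (x : K) : K := (x - θ (2 * l)) * (x - θ (2 * l + 1))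

def pairRatio (k l : ℕ) : K := pairPoly θ l (θ (2 * k)) / pairPoly θ l (θ (2 * k + 1))

theorem tauStar_succ (i : ℕ) (x : K) : tauStar θ (i + 1) x = tauStar θ i x * (x - θ i) :=
  prod_range_succ _ _

theorem etaStar_succ (d i : ℕ) (x : K) :
    etaStar θ d (i + 1) x = etaStar θ d i x * (x - θ (d - i)) :=
  prod_range_succ _ _

theorem tauStar_two_mul (k : ℕ) (x : K) :
    tauStar θ (2 * k) x = ∏ l ∈ range k, pairPoly θ l x :=
  prod_range_two_mul _ k

theorem etaStar_two_mul {k m : ℕ} (hk : k ≤ m) (x : K) :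
    etaStar θ (2 * m + 1) (2 * (m - k)) x = ∏ r ∈ Ico (k + 1) (m + 1), pairPoly θ r x := by
  rw [etaStar, range_eq_Ico, prod_Ico_reflect (fun j => x - θ j) 0 (by omega),
    show 2 * m + 1 + 1 - 2 * (m - k) = 2 * (k + 1) by omega,
    show 2 * m + 1 + 1 - 0 = 2 * (m + 1) by omega, prod_Ico_two_mul]
  rfl

variable {θ}

theorem pairPoly_ne_zero {n l j : ℕ} (hθ : Set.InjOn θ (Set.Iic n)) (hl : 2 * l + 1 ≤ n)
    (hj : j ≤ n) (hjl : j / 2 ≠ l) : pairPoly θ l (θ j) ≠ 0 :=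
  mul_ne_zero (sub_ne_zero.mpr (hθ.ne hj (by grind) (by omega)))
    (sub_ne_zero.mpr (hθ.ne hj hl (by omega)))

theorem sub_sq_mul_tauStar_etaStar_div_eq {m k : ℕ} (hθ : Set.InjOn θ (Set.Iic (2 * m + 1)))
    (hk : k ≤ m) :
    (θ (2 * k) - θ (2 * k + 1)) ^ 2 *
        (tauStar θ (2 * k) (θ (2 * k)) * etaStar θ (2 * m + 1) (2 * (m - k)) (θ (2 * k + 1))) /
        (tauStar θ (2 * k + 1) (θ (2 * k + 1)) *
          etaStar θ (2 * m + 1) (2 * (m - k) + 1) (θ (2 * k))) =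
      -((∏ l ∈ range k, pairRatio θ k l) /
        ∏ r ∈ Ico (k + 1) (m + 1), pairRatio θ k r) := by
  have hbelow : ∏ l ∈ range k, pairPoly θ l (θ (2 * k + 1)) ≠ 0 :=
    prod_ne_zero_iff.mpr fun l hl => pairPoly_ne_zero hθ (by grind) (by omega) (by grind)
  have habove : ∏ r ∈ Ico (k + 1) (m + 1), pairPoly θ r (θ (2 * k)) ≠ 0 :=
    prod_ne_zero_iff.mpr fun r hr => pairPoly_ne_zero hθ (by grind) (by omega) (by grind)
  have hgap : θ (2 * k) - θ (2 * k + 1) ≠ 0 :=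
    sub_ne_zero.mpr (hθ.ne (by grind) (by grind) (by omega))
  rw [tauStar_succ, etaStar_succ, show 2 * m + 1 - 2 * (m - k) = 2 * k + 1 by omega,
    tauStar_two_mul, tauStar_two_mul, etaStar_two_mul θ hk, etaStar_two_mul θ hk]
  simp only [pairRatio, prod_div_distrib]
  rw [← neg_sub (θ (2 * k))]
  field_simp

theorem pairRatio_div_pairRatio {m k l : ℕ} (hθ : Set.InjOn θ (Set.Iic (2 * m + 1)))
    (hk : k ≤ m) (hl : l < k) :
    pairRatio θ k l / pairRatio θ l k =
      ((θ (2 * l + 1) - θ (2 * k)) / (θ (2 * l) - θ (2 * k + 1))) ^ 2 := by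
  obtain ⟨h₁, h₂⟩ := mul_ne_zero_iff.mp
    (pairPoly_ne_zero (l := l) (j := 2 * k + 1) hθ (by omega) (by omega) (by omega))
  obtain ⟨h₃, h₄⟩ := mul_ne_zero_iff.mp
    (pairPoly_ne_zero (l := k) (j := 2 * l) hθ (by omega) (by omega) (by omega))
  simp only [pairRatio, pairPoly]
  field_simp
  ring

end DualPolynomials

/-- the product (1.8) evaluates to (-1)^{m+1} Ψ². -/
theorem stmt14 {K : Type*} [Field K] (d : ℕ) (hodd : Odd d)
    (θ : ℕ → K)
    (hdist : ∀ i j : ℕ, i ≤ d → j ≤ d → θ i = θ j → i = j)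
    (m : ℕ) (hm : m = (d - 1) / 2)
    (τ η : ℕ → K → K)
    (hτ : ∀ i x, τ i x = ∏ h ∈ Finset.range i, (x - θ h))
    (hη : ∀ i x, η i x = ∏ h ∈ Finset.range i, (x - θ (d - h))) :
    ∏ i ∈ (Finset.range (d+1)).filter (fun i => Odd i),
        (θ (i-1) - θ i) ^ 2 * (τ (i-1) (θ (i-1)) * η (d-i) (θ i)) /
          (τ i (θ i) * η (d-i+1) (θ (i-1)))
      = (-1 : K) ^ (m+1) *
        (∏ k ∈ Finset.range (m+1), ∏ l ∈ Finset.range k,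
          (θ (2*l+1) - θ (2*k)) / (θ (2*l) - θ (2*k+1))) ^ 2 := by
  obtain ⟨m', rfl⟩ := hodd
  obtain rfl : m = m' := by omega
  obtain rfl : τ = tauStar θ := funext fun i => funext (hτ i)
  obtain rfl : η = etaStar θ (2 * m + 1) := funext fun i => funext (hη i)
  have hθ : Set.InjOn θ (Set.Iic (2 * m + 1)) := fun i hi j hj => hdist i j hi hj
  rw [show 2 * m + 1 + 1 = 2 * (m + 1) by ring, prod_filter_odd_range_two_mul_s14]
  calc _ = ∏ k ∈ range (m + 1),
          -((∏ l ∈ range k, pairRatio θ k l) /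
            ∏ r ∈ Ico (k + 1) (m + 1), pairRatio θ k r) := by
        refine prod_congr rfl fun k hk => ?_
        rw [Nat.add_sub_cancel, show 2 * m + 1 - (2 * k + 1) = 2 * (m - k) by omega]
        exact sub_sq_mul_tauStar_etaStar_div_eq hθ (by grind)
    _ = (-1) ^ (m + 1) *
          ∏ k ∈ range (m + 1), ∏ l ∈ range k, pairRatio θ k l / pairRatio θ l k := by
        rw [prod_neg, card_range, prod_range_div_prod_Ico]
    _ = _ := by
        simp only [← prod_pow]
        refine congrArg _ (prod_congr rfl fun k hk => prod_congr rfl fun l hl => ?_)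
        exact pairRatio_div_pairRatio hθ (by grind) (by grind)
end
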